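/- If O is an observation (a wiring using no position constants) and W̄_p, W̄_q are two representations of the same word W with respect to position lists p and q, then O·W̄_p is nilpotent if and only if O·W̄_q is nilpotent. -/

import Mathlib

/-! First-order terms over variables `ℕ` and function symbols `ℕ` (each symbol
used with the arity of its argument list), substitutions, unification, and
flows `t ⊣ u` (with `Var(t) ⊆ Var(u)`, considered up to renaming). -/

/-- First-order terms. -/
inductive Term where
  | var : ℕ → Term
  | fn : ℕ → List Term → Term

mutual
/-- Apply a substitution to a term. -/
def Term.subst (θ : ℕ → Term) : Term → Term
  | .var n => θ n
  | .fn f ts => .fn f (Term.substList θ ts)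
/-- Apply a substitution to a list of terms. -/
def Term.substList (θ : ℕ → Term) : List Term → List Term
  | [] => []
  | t :: ts => Term.subst θ t :: Term.substList θ ts
end

mutual
/-- Variables occurring in a term. -/
def Term.vars : Term → Set ℕ
  | .var n => {n}
  | .fn _ ts => Term.varsList ts
/-- Variables occurring in a list of terms. -/
def Term.varsList : List Term → Set ℕ
  | [] => ∅
  | t :: ts => Term.vars t ∪ Term.varsList ts
end

/-- `θ` is a unifier of `t` and `u`. -/
def IsUnifier (θ : ℕ → Term) (t u : Term) : Prop := t.subst θ = u.subst θ

/-- `θ'` is an instance of `θ` (factors through `θ`). -/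
def InstanceOf (θ' θ : ℕ → Term) : Prop := ∃ ρ, ∀ n, θ' n = (θ n).subst ρ

/-- `θ` is a most general unifier of `t` and `u`. -/
def IsMGU (θ : ℕ → Term) (t u : Term) : Prop :=
  IsUnifier θ t u ∧ ∀ θ', IsUnifier θ' t u → InstanceOf θ' θ

/-- Apply a renaming (a bijection on variables) to a term. -/
def Term.rename (α : ℕ ≃ ℕ) (t : Term) : Term := t.subst fun n => .var (α n)

/-- Two terms are matchable if renamings of them with disjoint sets of
variables are unifiable. -/
def Matchable (t u : Term) : Prop :=
  ∃ α β : ℕ ≃ ℕ, Disjoint (t.rename α).vars (u.rename β).vars ∧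
    ∃ θ, IsUnifier θ (t.rename α) (u.rename β)

/-- A flow `t ⊣ u` with `Var(t) ⊆ Var(u)`. -/
structure RFlow where
  lhs : Term
  rhs : Term
  sub : lhs.vars ⊆ rhs.vars

instance : Inhabited RFlow := ⟨⟨.var 0, .var 0, Set.Subset.rfl⟩⟩

/-- Equality of flows up to renaming. -/
def FlowEquiv (f g : RFlow) : Prop :=
  ∃ α : ℕ ≃ ℕ, g.lhs = f.lhs.rename α ∧ g.rhs = f.rhs.rename α

/-- `r` is a resolution product of `f` and `g`: after renaming `g` apart from
`f`, the MGU `θ` of `f`'s right term and `g`'s left term exists and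
`r = θ(f.lhs) ⊣ θ(g.rhs)`. -/
def FlowCompRel (f g r : RFlow) : Prop :=
  ∃ g' : RFlow, FlowEquiv g g' ∧ Disjoint f.rhs.vars g'.lhs.vars ∧
    ∃ θ, IsMGU θ f.rhs g'.lhs ∧
      r.lhs = f.lhs.subst θ ∧ r.rhs = g'.rhs.subst θ

open Classical in
/-- The product of flows (`none` = undefined = 0). -/
noncomputable def fcomp (f g : RFlow) : Option RFlow :=
  if h : ∃ r, FlowCompRel f g r then some h.choose else none

/-- Product extended to possibly-undefined flows. -/
noncomputable def fcompO (a b : Option RFlow) : Option RFlow :=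
  a.bind fun f => b.bind fun g => fcomp f g

/-- Equality up to renaming of possibly-undefined flows. -/
def OEquiv (a b : Option RFlow) : Prop :=
  (a = none ∧ b = none) ∨ ∃ f g, a = some f ∧ b = some g ∧ FlowEquiv f g

/-! Flows up to renaming, and wirings (finite sets of flows). -/

/-- Flows considered up to renaming. -/
def FlowQ := Quot FlowEquiv

/-- The class of a flow. -/
def FlowQ.mk (f : RFlow) : FlowQ := Quot.mk _ f

noncomputable instance : DecidableEq FlowQ := Classical.decEq _

open Classical in
/-- The product of flows up to renaming (`none` = 0). -/
noncomputable def qcomp (a b : FlowQ) : Option FlowQ :=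
  (fcomp a.out b.out).map FlowQ.mk

/-- A wiring: a finite set of flows (up to renaming). -/
abbrev Wiring := Finset FlowQ

open Classical in
/-- Product of wirings: pointwise products of flows, keeping defined ones. -/
noncomputable def wmul (F G : Wiring) : Wiring :=
  (F ×ˢ G).biUnion fun p => (qcomp p.1 p.2).toFinset

/-- The unit wiring `{x ⊣ x}`. -/
noncomputable def wone : Wiring := {FlowQ.mk ⟨.var 0, .var 0, Set.Subset.rfl⟩}

/-! Words and their representations.  Function symbols are coded by natural
numbers: the binary symbol `•` is `1`, the constants `l`, `r`, `⋆` are `3`,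
`5`, `7`, the letter `a` of the alphabet is the constant `2a+9`, and the
position constants are the even numbers. -/

mutual
/-- Function symbols occurring in a term. -/
def Term.syms : Term → Set ℕ
  | .var _ => ∅
  | .fn f ts => insert f (Term.symsList ts)
/-- Function symbols occurring in a list of terms. -/
def Term.symsList : List Term → Set ℕ
  | [] => ∅
  | t :: ts => Term.syms t ∪ Term.symsList ts
end

/-- The closed term `a • (d • p)` for constants `a`, `d`, `p`. -/
def mk3 (a d p : ℕ) : Term := .fn 1 [.fn a [], .fn 1 [.fn d [], .fn p []]]

lemma vars_mk3 (a d p : ℕ) : (mk3 a d p).vars = ∅ := by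
  simp [mk3, Term.vars, Term.varsList]

/-- The constant `cᵢ` of the word `W`: `⋆` for `i = 0` and the `i`-th letter
of `W` otherwise. -/
def ci (W : List ℕ) (i : ℕ) : ℕ := if i = 0 then 7 else 2 * W.getD (i - 1) 0 + 9

/-- The term `cᵢ • r • pᵢ`. -/
def termR (W : List ℕ) (p : ℕ → ℕ) (i : ℕ) : Term := mk3 (ci W i) 5 (p i)

/-- The term `c_{i+1} • l • p_{i+1}` (indices mod `n+1`). -/
def termL (W : List ℕ) (p : ℕ → ℕ) (i : ℕ) : Term :=
  mk3 (ci W ((i + 1) % (W.length + 1))) 3 (p ((i + 1) % (W.length + 1)))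

/-- The representation `W̄_p` of the word `W` with positions `p`:
`Σᵢ (cᵢ • r • pᵢ ⇌ c_{i+1} • l • p_{i+1})`. -/
noncomputable def repW (W : List ℕ) (p : ℕ → ℕ) : Wiring :=
  (Finset.range (W.length + 1)).biUnion fun i =>
    {FlowQ.mk ⟨termR W p i, termL W p i, by
        rw [termR, termL, vars_mk3, vars_mk3]⟩,
     FlowQ.mk ⟨termL W p i, termR W p i, by
        rw [termR, termL, vars_mk3, vars_mk3]⟩}

/-- A valid list of positions for `W`: pairwise distinct position constants. -/
def ValidPos (W : List ℕ) (p : ℕ → ℕ) : Prop :=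
  (∀ i ≤ W.length, Even (p i)) ∧ Set.InjOn p {i | i ≤ W.length}

/-- An observation: a wiring in which no position constant occurs. -/
def IsObservation (O : Wiring) : Prop :=
  ∀ a ∈ O, ∀ s, s ∈ a.out.lhs.syms ∪ a.out.rhs.syms → ¬ Even s

/-- Powers of a wiring. -/
noncomputable def wpow (F : Wiring) : ℕ → Wiring
  | 0 => wone
  | n + 1 => wmul (wpow F n) F

/-- Nilpotency of a wiring. -/
def WNilpotent (F : Wiring) : Prop := ∃ n, 0 < n ∧ wpow F n = ∅

/-! The symbols `p i` and `q i` are even and pairwise distinct, while an observation and the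
rest of a representation only use odd symbols, so some permutation `σ` of the symbols fixes every
odd symbol and sends `p i` to `q i`. Renaming symbols along a permutation commutes with
unification, hence with the product of flows when the right factor is ground (the product is
then unique, not only up to renaming); every flow of a representation is ground, and so is every
flow of `O · W̄_p`. Therefore `σ` maps each power of
`O · W̄_p` onto the same power of `O · W̄_q`, and a wiring is empty iff its image is. -/

namespace Term

mutual
theorem subst_congr {θ θ' : ℕ → Term} : ∀ t : Term,
    (∀ n ∈ t.vars, θ n = θ' n) → t.subst θ = t.subst θ'
  | .var n, h => by simpa [Term.subst] using h n (by simp [Term.vars])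
  | .fn f ts, h => by
      simp only [Term.subst]
      exact congrArg _ (substList_congr ts (by simpa [Term.vars] using h))
theorem substList_congr {θ θ' : ℕ → Term} : ∀ ts : List Term,
    (∀ n ∈ Term.varsList ts, θ n = θ' n) → Term.substList θ ts = Term.substList θ' ts
  | [], _ => rfl
  | t :: ts, h => by
      simp only [Term.substList]
      exact congrArg₂ _ (subst_congr t fun n hn => h n (by simp [Term.varsList, hn]))
        (substList_congr ts fun n hn => h n (by simp [Term.varsList, hn]))
end

mutual
theorem subst_var : ∀ t : Term, t.subst .var = t
  | .var _ => rfl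
  | .fn f ts => by simp only [Term.subst]; exact congrArg _ (substList_var ts)
theorem substList_var : ∀ ts : List Term, Term.substList .var ts = ts
  | [] => rfl
  | t :: ts => by
      simp only [Term.substList]
      exact congrArg₂ _ (subst_var t) (substList_var ts)
end

mutual
theorem subst_subst (θ ρ : ℕ → Term) : ∀ t : Term,
    (t.subst θ).subst ρ = t.subst fun n => (θ n).subst ρ
  | .var n => by simp [Term.subst]
  | .fn f ts => by
      simp only [Term.subst]
      exact congrArg _ (substList_subst θ ρ ts)
theorem substList_subst (θ ρ : ℕ → Term) : ∀ ts : List Term,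
    Term.substList ρ (Term.substList θ ts) = Term.substList (fun n => (θ n).subst ρ) ts
  | [] => rfl
  | t :: ts => by
      simp only [Term.substList]
      exact congrArg₂ _ (subst_subst θ ρ t) (substList_subst θ ρ ts)
end

theorem subst_of_vars_eq_empty {t : Term} (h : t.vars = ∅) (θ : ℕ → Term) : t.subst θ = t :=
  (subst_congr t (by simp [h])).trans (subst_var t)

theorem rename_subst (α : ℕ ≃ ℕ) (θ : ℕ → Term) (t : Term) :
    (t.rename α).subst θ = t.subst fun n => θ (α n) := by
  rw [rename, subst_subst]
  exact subst_congr t fun n _ => by simp [Term.subst]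

theorem rename_refl (t : Term) : t.rename (Equiv.refl ℕ) = t := subst_var t

theorem rename_rename (α β : ℕ ≃ ℕ) (t : Term) :
    (t.rename α).rename β = t.rename (α.trans β) := by
  rw [rename, rename_subst]; rfl

theorem rename_of_vars_eq_empty {t : Term} (h : t.vars = ∅) (α : ℕ ≃ ℕ) : t.rename α = t :=
  subst_of_vars_eq_empty h _

mutual
def mapSyms (σ : ℕ → ℕ) : Term → Term
  | .var n => .var n
  | .fn f ts => .fn (σ f) (mapSymsList σ ts)
def mapSymsList (σ : ℕ → ℕ) : List Term → List Term
  | [] => []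
  | t :: ts => mapSyms σ t :: mapSymsList σ ts
end

mutual
theorem vars_mapSyms (σ : ℕ → ℕ) : ∀ t : Term, (t.mapSyms σ).vars = t.vars
  | .var _ => rfl
  | .fn f ts => by
      simp only [mapSyms, Term.vars]
      exact varsList_mapSymsList σ ts
theorem varsList_mapSymsList (σ : ℕ → ℕ) : ∀ ts : List Term,
    Term.varsList (mapSymsList σ ts) = Term.varsList ts
  | [] => rfl
  | t :: ts => by
      simp only [mapSymsList, Term.varsList]
      rw [vars_mapSyms σ t, varsList_mapSymsList σ ts]
end

mutual
theorem mapSyms_subst (σ : ℕ → ℕ) (θ : ℕ → Term) : ∀ t : Term,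
    (t.subst θ).mapSyms σ = (t.mapSyms σ).subst fun n => (θ n).mapSyms σ
  | .var n => by simp [Term.subst, mapSyms]
  | .fn f ts => by
      simp only [Term.subst, mapSyms]
      exact congrArg _ (mapSymsList_substList σ θ ts)
theorem mapSymsList_substList (σ : ℕ → ℕ) (θ : ℕ → Term) : ∀ ts : List Term,
    mapSymsList σ (Term.substList θ ts) =
      Term.substList (fun n => (θ n).mapSyms σ) (mapSymsList σ ts)
  | [] => rfl
  | t :: ts => by
      simp only [Term.substList, mapSymsList]
      exact congrArg₂ _ (mapSyms_subst σ θ t) (mapSymsList_substList σ θ ts)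
end

mutual
theorem mapSyms_mapSyms (σ τ : ℕ → ℕ) : ∀ t : Term,
    (t.mapSyms σ).mapSyms τ = t.mapSyms (τ ∘ σ)
  | .var _ => rfl
  | .fn f ts => by
      simp only [mapSyms]
      exact congrArg _ (mapSymsList_mapSymsList σ τ ts)
theorem mapSymsList_mapSymsList (σ τ : ℕ → ℕ) : ∀ ts : List Term,
    mapSymsList τ (mapSymsList σ ts) = mapSymsList (τ ∘ σ) ts
  | [] => rfl
  | t :: ts => by
      simp only [mapSymsList]
      exact congrArg₂ _ (mapSyms_mapSyms σ τ t) (mapSymsList_mapSymsList σ τ ts)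
end

mutual
theorem mapSyms_eq_self {σ : ℕ → ℕ} : ∀ t : Term, (∀ s ∈ t.syms, σ s = s) → t.mapSyms σ = t
  | .var _, _ => rfl
  | .fn f ts, h => by
      simp only [mapSyms]
      refine congrArg₂ _ (h f (by simp [Term.syms])) ?_
      exact mapSymsList_eq_self ts fun s hs => h s (by simp [Term.syms, hs])
theorem mapSymsList_eq_self {σ : ℕ → ℕ} : ∀ ts : List Term,
    (∀ s ∈ Term.symsList ts, σ s = s) → mapSymsList σ ts = ts
  | [], _ => rfl
  | t :: ts, h => by
      simp only [mapSymsList]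
      exact congrArg₂ _ (mapSyms_eq_self t fun s hs => h s (by simp [Term.symsList, hs]))
        (mapSymsList_eq_self ts fun s hs => h s (by simp [Term.symsList, hs]))
end

@[simp]
theorem mapSyms_symm_mapSyms (σ : Equiv.Perm ℕ) (t : Term) :
    (t.mapSyms σ).mapSyms σ.symm = t := by
  rw [mapSyms_mapSyms]
  exact mapSyms_eq_self t fun s _ => σ.symm_apply_apply s

@[simp]
theorem mapSyms_mapSyms_symm (σ : Equiv.Perm ℕ) (t : Term) :
    (t.mapSyms σ.symm).mapSyms σ = t := by
  simpa using mapSyms_symm_mapSyms σ.symm t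

theorem mapSyms_rename (σ : ℕ → ℕ) (α : ℕ ≃ ℕ) (t : Term) :
    (t.rename α).mapSyms σ = (t.mapSyms σ).rename α := by
  rw [rename, mapSyms_subst, rename]
  rfl

end Term

theorem IsMGU.rename {θ : ℕ → Term} {t u : Term} (h : IsMGU θ t u) (α : ℕ ≃ ℕ) :
    IsMGU (fun n => θ (α.symm n)) (t.rename α) (u.rename α) := by
  refine ⟨?_, fun θ' h' => ?_⟩
  · simpa [IsUnifier, Term.rename_subst] using h.1
  · obtain ⟨ρ, hρ⟩ := h.2 (fun n => θ' (α n)) (by simpa [IsUnifier, Term.rename_subst] using h')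
    exact ⟨ρ, fun n => by simpa using hρ (α.symm n)⟩

theorem IsMGU.mapSyms {θ : ℕ → Term} {t u : Term} (h : IsMGU θ t u) (σ : Equiv.Perm ℕ) :
    IsMGU (fun n => (θ n).mapSyms σ) (t.mapSyms σ) (u.mapSyms σ) := by
  refine ⟨?_, fun θ' h' => ?_⟩
  · simp only [IsUnifier, ← Term.mapSyms_subst]
    exact congrArg _ h.1
  · have hθ' : IsUnifier (fun n => (θ' n).mapSyms σ.symm) t u := by
      have := congrArg (Term.mapSyms σ.symm) h'
      simpa [IsUnifier, Term.mapSyms_subst] using this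
    obtain ⟨ρ, hρ⟩ := h.2 _ hθ'
    refine ⟨fun m => (ρ m).mapSyms σ, fun n => ?_⟩
    rw [← Term.mapSyms_subst, ← hρ n, Term.mapSyms_mapSyms_symm]

namespace RFlow

theorem ext' : ∀ {f g : RFlow}, f.lhs = g.lhs → f.rhs = g.rhs → f = g
  | ⟨_, _, _⟩, ⟨_, _, _⟩, rfl, rfl => rfl

/-- A flow without variables; `Var(lhs) ⊆ Var(rhs)` makes the right term decisive. -/
def IsGround (f : RFlow) : Prop := f.rhs.vars = ∅

theorem IsGround.lhs {f : RFlow} (h : f.IsGround) : f.lhs.vars = ∅ :=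
  Set.eq_empty_of_subset_empty (h ▸ f.sub)

def mapSyms (σ : ℕ → ℕ) (f : RFlow) : RFlow :=
  ⟨f.lhs.mapSyms σ, f.rhs.mapSyms σ, by
    rw [Term.vars_mapSyms, Term.vars_mapSyms]; exact f.sub⟩

theorem IsGround.mapSyms {f : RFlow} (h : f.IsGround) (σ : ℕ → ℕ) : (f.mapSyms σ).IsGround :=
  (Term.vars_mapSyms σ f.rhs).trans h

@[simp]
theorem mapSyms_symm_mapSyms (σ : Equiv.Perm ℕ) (f : RFlow) :
    (f.mapSyms σ).mapSyms σ.symm = f :=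
  ext' (Term.mapSyms_symm_mapSyms σ f.lhs) (Term.mapSyms_symm_mapSyms σ f.rhs)

@[simp]
theorem mapSyms_mapSyms_symm (σ : Equiv.Perm ℕ) (f : RFlow) :
    (f.mapSyms σ.symm).mapSyms σ = f :=
  ext' (Term.mapSyms_mapSyms_symm σ f.lhs) (Term.mapSyms_mapSyms_symm σ f.rhs)

end RFlow

namespace FlowEquiv

theorem refl (f : RFlow) : FlowEquiv f f :=
  ⟨Equiv.refl ℕ, (Term.rename_refl _).symm, (Term.rename_refl _).symm⟩

theorem symm {f g : RFlow} : FlowEquiv f g → FlowEquiv g f := by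
  rintro ⟨α, hl, hr⟩
  exact ⟨α.symm, by rw [hl, Term.rename_rename, Equiv.self_trans_symm, Term.rename_refl],
    by rw [hr, Term.rename_rename, Equiv.self_trans_symm, Term.rename_refl]⟩

theorem trans {f g h : RFlow} : FlowEquiv f g → FlowEquiv g h → FlowEquiv f h := by
  rintro ⟨α, hl, hr⟩ ⟨β, hl', hr'⟩
  exact ⟨α.trans β, by rw [hl', hl, Term.rename_rename], by rw [hr', hr, Term.rename_rename]⟩

theorem eq_of_isGround {f g : RFlow} (h : FlowEquiv f g) (hf : f.IsGround) : g = f := by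
  obtain ⟨α, hl, hr⟩ := h
  exact RFlow.ext' (by rw [hl, Term.rename_of_vars_eq_empty hf.lhs])
    (by rw [hr, Term.rename_of_vars_eq_empty hf])

theorem mapSyms (σ : ℕ → ℕ) {f g : RFlow} (h : FlowEquiv f g) :
    FlowEquiv (f.mapSyms σ) (g.mapSyms σ) := by
  obtain ⟨α, hl, hr⟩ := h
  exact ⟨α, by simp [RFlow.mapSyms, hl, Term.mapSyms_rename],
    by simp [RFlow.mapSyms, hr, Term.mapSyms_rename]⟩

end FlowEquiv

section GroundRightFactor

variable {f g r : RFlow}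

theorem flowCompRel_iff_of_isGround (hg : g.IsGround) :
    FlowCompRel f g r ↔ ∃ θ, IsMGU θ f.rhs g.lhs ∧ r.lhs = f.lhs.subst θ ∧ r.rhs = g.rhs := by
  constructor
  · rintro ⟨g', hgg', -, θ, hθ, hl, hr⟩
    obtain rfl := hgg'.eq_of_isGround hg
    exact ⟨θ, hθ, hl, hr.trans (Term.subst_of_vars_eq_empty hg θ)⟩
  · rintro ⟨θ, hθ, hl, hr⟩
    exact ⟨g, .refl g, by simp [hg.lhs], θ, hθ, hl,
      hr.trans (Term.subst_of_vars_eq_empty hg θ).symm⟩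

theorem FlowCompRel.isGround (hg : g.IsGround) (h : FlowCompRel f g r) : r.IsGround := by
  obtain ⟨-, -, -, hr⟩ := (flowCompRel_iff_of_isGround hg).mp h
  rw [RFlow.IsGround, hr]
  exact hg

/-- A second product is an instance of the first one, which is ground. -/
theorem FlowCompRel.unique {r' : RFlow} (hg : g.IsGround) (h : FlowCompRel f g r)
    (h' : FlowCompRel f g r') : r' = r := by
  have hr := h.isGround hg
  obtain ⟨θ, hθ, hl, hrr⟩ := (flowCompRel_iff_of_isGround hg).mp h
  obtain ⟨θ', hθ', hl', hrr'⟩ := (flowCompRel_iff_of_isGround hg).mp h'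
  obtain ⟨ρ, hρ⟩ := hθ.2 θ' hθ'.1
  refine RFlow.ext' ?_ (hrr'.trans hrr.symm)
  rw [hl', funext hρ, ← Term.subst_subst, ← hl, Term.subst_of_vars_eq_empty hr.lhs]

theorem FlowCompRel.of_flowEquiv_left {f' : RFlow} (hg : g.IsGround) (hf : FlowEquiv f f')
    (h : FlowCompRel f g r) : FlowCompRel f' g r := by
  obtain ⟨α, hfl, hfr⟩ := hf
  obtain ⟨θ, hθ, hl, hr⟩ := (flowCompRel_iff_of_isGround hg).mp h
  refine (flowCompRel_iff_of_isGround hg).mpr ⟨fun n => θ (α.symm n), ?_, ?_, hr⟩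
  · simpa [hfr, Term.rename_of_vars_eq_empty hg.lhs] using hθ.rename α
  · simp [hl, hfl, Term.rename_subst]

theorem FlowCompRel.mapSyms (σ : Equiv.Perm ℕ) (hg : g.IsGround) (h : FlowCompRel f g r) :
    FlowCompRel (f.mapSyms σ) (g.mapSyms σ) (r.mapSyms σ) := by
  obtain ⟨θ, hθ, hl, hr⟩ := (flowCompRel_iff_of_isGround hg).mp h
  refine (flowCompRel_iff_of_isGround (hg.mapSyms σ)).mpr ⟨_, hθ.mapSyms σ, ?_, ?_⟩
  · simp [RFlow.mapSyms, hl, Term.mapSyms_subst]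
  · simp [RFlow.mapSyms, hr]

theorem flowCompRel_mapSyms_iff (σ : Equiv.Perm ℕ) (hg : g.IsGround) :
    FlowCompRel (f.mapSyms σ) (g.mapSyms σ) (r.mapSyms σ) ↔ FlowCompRel f g r := by
  refine ⟨fun h => ?_, .mapSyms σ hg⟩
  simpa using h.mapSyms σ.symm (hg.mapSyms σ)

theorem fcomp_eq_some_iff (hg : g.IsGround) : fcomp f g = some r ↔ FlowCompRel f g r := by
  unfold fcomp
  split_ifs with h
  · exact ⟨fun e => Option.some.inj e ▸ h.choose_spec,
      fun hr => congrArg some (FlowCompRel.unique hg hr h.choose_spec)⟩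
  · exact ⟨nofun, fun hr => h ⟨r, hr⟩⟩

theorem fcomp_congr_left {f' : RFlow} (hg : g.IsGround) (hf : FlowEquiv f f') :
    fcomp f' g = fcomp f g :=
  Option.ext fun r => by
    rw [fcomp_eq_some_iff hg, fcomp_eq_some_iff hg]
    exact ⟨.of_flowEquiv_left hg hf.symm, .of_flowEquiv_left hg hf⟩

theorem fcomp_mapSyms (σ : Equiv.Perm ℕ) (hg : g.IsGround) :
    fcomp (f.mapSyms σ) (g.mapSyms σ) = (fcomp f g).map (RFlow.mapSyms σ) :=
  Option.ext fun r => by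
    rw [fcomp_eq_some_iff (hg.mapSyms σ), Option.map_eq_some_iff]
    constructor
    · intro h
      refine ⟨r.mapSyms σ.symm, (fcomp_eq_some_iff hg).mpr ?_, by simp⟩
      rwa [← flowCompRel_mapSyms_iff σ hg, RFlow.mapSyms_mapSyms_symm]
    · rintro ⟨r, hr, rfl⟩
      exact (fcomp_eq_some_iff hg |>.mp hr).mapSyms σ hg

end GroundRightFactor

namespace FlowQ

theorem mk_out (a : FlowQ) : mk a.out = a := Quot.out_eq a

theorem mk_eq_mk {f g : RFlow} : mk f = mk g ↔ FlowEquiv f g :=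
  Quot.eq.trans (Equivalence.eqvGen_iff ⟨FlowEquiv.refl, FlowEquiv.symm, FlowEquiv.trans⟩)

theorem flowEquiv_out_mk (f : RFlow) : FlowEquiv (mk f).out f :=
  mk_eq_mk.mp (mk_out _)

theorem out_mk_of_isGround {f : RFlow} (hf : f.IsGround) : (mk f).out = f :=
  ((flowEquiv_out_mk f).symm).eq_of_isGround hf

def IsGround (a : FlowQ) : Prop := a.out.IsGround

theorem isGround_mk {f : RFlow} (hf : f.IsGround) : (mk f).IsGround := by
  rw [IsGround, out_mk_of_isGround hf]
  exact hf

def mapSyms (σ : ℕ → ℕ) : FlowQ → FlowQ :=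
  Quot.map (RFlow.mapSyms σ) fun _ _ => FlowEquiv.mapSyms σ

theorem mapSyms_mk (σ : ℕ → ℕ) (f : RFlow) : (mk f).mapSyms σ = mk (f.mapSyms σ) := rfl

theorem mapSyms_eq_mk_out (σ : ℕ → ℕ) (a : FlowQ) : a.mapSyms σ = mk (a.out.mapSyms σ) := by
  conv_lhs => rw [← mk_out a]
  rfl

theorem mapSyms_eq_self {σ : ℕ → ℕ} {a : FlowQ}
    (h : ∀ s ∈ a.out.lhs.syms ∪ a.out.rhs.syms, σ s = s) : a.mapSyms σ = a := by
  rw [mapSyms_eq_mk_out]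
  conv_rhs => rw [← mk_out a]
  congr 1
  exact RFlow.ext' (Term.mapSyms_eq_self _ fun s hs => h s (.inl hs))
    (Term.mapSyms_eq_self _ fun s hs => h s (.inr hs))

theorem qcomp_mapSyms (σ : Equiv.Perm ℕ) (a : FlowQ) {b : FlowQ} (hb : b.IsGround) :
    qcomp (a.mapSyms σ) (b.mapSyms σ) = (qcomp a b).map (mapSyms σ) := by
  have hσb : (b.out.mapSyms σ).IsGround := RFlow.IsGround.mapSyms hb σ
  have hb' : (b.mapSyms σ).out = b.out.mapSyms σ := by
    rw [mapSyms_eq_mk_out, out_mk_of_isGround hσb]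
  have ha' : FlowEquiv (a.out.mapSyms σ) (a.mapSyms σ).out := by
    rw [mapSyms_eq_mk_out]
    exact (flowEquiv_out_mk _).symm
  rw [qcomp, qcomp, hb', fcomp_congr_left hσb ha', fcomp_mapSyms σ hb, Option.map_map,
    Option.map_map]
  rfl

end FlowQ

def Wiring.IsGround (F : Wiring) : Prop := ∀ a ∈ F, a.IsGround

theorem isGround_wmul {A B : Wiring} (hB : B.IsGround) : (wmul A B).IsGround := by
  intro r hr
  simp only [wmul, Finset.mem_biUnion, Finset.mem_product, Option.mem_toFinset, qcomp,
    Option.mem_def, Option.map_eq_some_iff] at hr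
  obtain ⟨⟨a, b⟩, ⟨-, hb⟩, r, hr, rfl⟩ := hr
  exact FlowQ.isGround_mk (((fcomp_eq_some_iff (hB b hb)).mp hr).isGround (hB b hb))

section ImageOfWirings

variable {φ : FlowQ → FlowQ}

theorem wmul_image {A B : Wiring} (h : ∀ a, ∀ b ∈ B, qcomp (φ a) (φ b) = (qcomp a b).map φ) :
    wmul (A.image φ) (B.image φ) = (wmul A B).image φ := by
  ext r
  simp only [wmul, Finset.mem_biUnion, Finset.mem_product, Finset.mem_image, Option.mem_toFinset,
    Option.mem_def, Prod.exists]
  constructor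
  · rintro ⟨_, _, ⟨⟨a, ha, rfl⟩, ⟨b, hb, rfl⟩⟩, hr⟩
    obtain ⟨r, hab, rfl⟩ := Option.map_eq_some_iff.mp ((h a b hb).symm.trans hr)
    exact ⟨r, ⟨a, b, ⟨ha, hb⟩, hab⟩, rfl⟩
  · rintro ⟨r, ⟨a, b, ⟨ha, hb⟩, hr⟩, rfl⟩
    exact ⟨φ a, φ b, ⟨⟨a, ha, rfl⟩, ⟨b, hb, rfl⟩⟩, by rw [h a b hb, hr, Option.map_some]⟩

theorem wpow_image {F : Wiring} (hone : wone.image φ = wone)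
    (h : ∀ a, ∀ b ∈ F, qcomp (φ a) (φ b) = (qcomp a b).map φ) :
    ∀ n, wpow (F.image φ) n = (wpow F n).image φ
  | 0 => hone.symm
  | n + 1 => by rw [wpow, wpow, wpow_image hone h n, wmul_image h]

theorem wNilpotent_image_iff {F : Wiring} (hone : wone.image φ = wone)
    (h : ∀ a, ∀ b ∈ F, qcomp (φ a) (φ b) = (qcomp a b).map φ) :
    WNilpotent (F.image φ) ↔ WNilpotent F := by
  simp only [WNilpotent, wpow_image hone h, Finset.image_eq_empty]

end ImageOfWirings

theorem wNilpotent_image_mapSyms_iff (σ : Equiv.Perm ℕ) {F : Wiring} (hF : F.IsGround) :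
    WNilpotent (F.image (FlowQ.mapSyms σ)) ↔ WNilpotent F :=
  wNilpotent_image_iff
    (by rw [wone, Finset.image_singleton, FlowQ.mapSyms_mk]; rfl)
    fun a b hb => FlowQ.qcomp_mapSyms σ a (hF b hb)

theorem ValidPos.injective {W : List ℕ} {p : ℕ → ℕ} (hp : ValidPos W p) :
    Function.Injective fun i : Fin (W.length + 1) => (⟨p i, hp.1 i i.is_le⟩ : {x : ℕ // Even x}) :=
  fun i j h => Fin.ext (hp.2 i.is_le j.is_le (congrArg Subtype.val h))

theorem exists_perm_fixing_odd (W : List ℕ) {p q : ℕ → ℕ} (hp : ValidPos W p)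
    (hq : ValidPos W q) :
    ∃ σ : Equiv.Perm ℕ, (∀ s, ¬ Even s → σ s = s) ∧ ∀ i ≤ W.length, σ (p i) = q i := by
  obtain ⟨π, hπ⟩ := Equiv.Perm.exists_extending_pair _ _ hp.injective hq.injective
  refine ⟨π.extendDomain (Equiv.refl _), fun s hs => π.extendDomain_apply_not_subtype _ hs,
    fun i hi => ?_⟩
  rw [π.extendDomain_apply_subtype _ (hp.1 i hi)]
  exact congrArg Subtype.val (hπ ⟨i, Nat.lt_succ_of_le hi⟩)

theorem isGround_repW (W : List ℕ) (p : ℕ → ℕ) : (repW W p).IsGround := by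
  intro a ha
  simp only [repW, Finset.mem_biUnion, Finset.mem_insert, Finset.mem_singleton] at ha
  obtain ⟨i, -, rfl | rfl⟩ := ha
  · exact FlowQ.isGround_mk (vars_mk3 ..)
  · exact FlowQ.isGround_mk (vars_mk3 ..)

theorem ci_not_even (W : List ℕ) (i : ℕ) : ¬ Even (ci W i) := by
  unfold ci
  split_ifs
  · decide
  · rintro ⟨k, hk⟩; omega

theorem mapSyms_mk3 {σ : ℕ → ℕ} (h1 : σ 1 = 1) {a d : ℕ} (ha : σ a = a) (hd : σ d = d) (c : ℕ) :
    (mk3 a d c).mapSyms σ = mk3 a d (σ c) := by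
  simp [mk3, Term.mapSyms, Term.mapSymsList, h1, ha, hd]

theorem image_mapSyms_repW {σ : ℕ → ℕ} (hodd : ∀ s, ¬ Even s → σ s = s) {W : List ℕ} {p q : ℕ → ℕ}
    (hpq : ∀ i ≤ W.length, σ (p i) = q i) :
    (repW W p).image (FlowQ.mapSyms σ) = repW W q := by
  have h1 : σ 1 = 1 := hodd 1 (by decide)
  have hR : ∀ i ≤ W.length, (termR W p i).mapSyms σ = termR W q i := fun i hi => by
    rw [termR, termR, mapSyms_mk3 h1 (hodd _ (ci_not_even W i)) (hodd 5 (by decide)), hpq i hi]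
  have hL : ∀ i, (termL W p i).mapSyms σ = termL W q i := fun i => by
    rw [termL, termL, mapSyms_mk3 h1 (hodd _ (ci_not_even W _)) (hodd 3 (by decide)),
      hpq _ (Nat.lt_succ_iff.mp (Nat.mod_lt _ W.length.succ_pos))]
  rw [repW, repW, Finset.biUnion_image]
  refine Finset.biUnion_congr rfl fun i hi => ?_
  have hi : i ≤ W.length := Nat.lt_succ_iff.mp (Finset.mem_range.mp hi)
  rw [Finset.image_insert, Finset.image_singleton, FlowQ.mapSyms_mk, FlowQ.mapSyms_mk]
  refine congrArg₂ (fun x y => ({x, y} : Finset FlowQ)) ?_ ?_ <;> congr 1 <;> apply RFlow.ext' <;>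
    first | exact hR i hi | exact hL i

/-- normativity: for an observation `O` and two representations
`W̄_p`, `W̄_q` of the same word `W`, `O·W̄_p` is nilpotent iff `O·W̄_q` is. -/
theorem normativity (O : Wiring) (W : List ℕ) (p q : ℕ → ℕ)
    (hO : IsObservation O) (hp : ValidPos W p) (hq : ValidPos W q) :
    WNilpotent (wmul O (repW W p)) ↔ WNilpotent (wmul O (repW W q)) := by
  obtain ⟨σ, hodd, hpq⟩ := exists_perm_fixing_odd W hp hq
  have hOσ : O.image (FlowQ.mapSyms σ) = O :=
    (Finset.image_congr fun a ha => FlowQ.mapSyms_eq_self fun s hs => hodd s (hO a ha s hs)).trans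
      Finset.image_id
  have hσ : (wmul O (repW W p)).image (FlowQ.mapSyms σ) = wmul O (repW W q) := by
    rw [← wmul_image fun a b hb => FlowQ.qcomp_mapSyms σ a (isGround_repW W p b hb), hOσ,
      image_mapSyms_repW hodd hpq]
  rw [← hσ, wNilpotent_image_mapSyms_iff σ (isGround_wmul (isGround_repW W p))]
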